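/- arXiv:1503.01341 — 7 statements merged into one kernel-verified Lean document; each statement's English description precedes it below -/
import Mathlib

section
/- Let H be a complex Hilbert space whose inner product ⟨·,·⟩ is conjugate-linear in the first variable, let α ∈ (0,1], and let E : 𝕋 → H be a map which is α-Hölderian with constant C (i.e. ‖E(e^{iθ}) − E(e^{iθ'})‖ ≤ C·|θ − θ'|^α for all θ, θ' ∈ [0,2π)) and bounded, with B := sup_{λ∈𝕋} ‖E(λ)‖ < ∞. Then for every x, y ∈ H and every integer n ≥ 1, |∫_𝕋 λ^n · ⟨x, E(λ)⟩ · conj(⟨y, E(λ)⟩) dμ(λ)| ≤ B·C·π^α·‖x‖·‖y‖ / n^α. -/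
/-!
Since `(e^{i(θ + π/n)})^n = -(e^{iθ})^n`, cutting `[0, 2π]` into `n` blocks of length `2π/n` and
folding the second half of each block onto the first rewrites the integral as
`∫ e^{inθ} (G θ - G (θ + π/n))` over half-blocks of total length `π`, where
`G θ = ⟪x, E(e^{iθ})⟫ · conj ⟪y, E(e^{iθ})⟫` is Hölder with constant `2BC‖x‖‖y‖`. This bounds the
integral by `π · 2BC‖x‖‖y‖ (π/n)^α`. Folding within blocks, rather than shifting the whole
circle, never compares `E` across the seam `θ = 0 ≡ 2π`, where the Hölder bound says nothing.
-/

open MeasureTheory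
open scoped Real

open Set Complex ComplexConjugate

section Integral

variable {E : Type*} [NormedAddCommGroup E] {f : ℝ → E}

theorem intervalIntegrable_of_continuousOn_Ico_of_norm_le {a b M : ℝ} (hab : a ≤ b)
    (hf : ContinuousOn f (Ico a b)) (hM : ∀ θ ∈ Ico a b, ‖f θ‖ ≤ M) :
    IntervalIntegrable f volume a b := by
  rw [intervalIntegrable_iff_integrableOn_Ico_of_le hab]
  exact .of_bound measure_Ico_lt_top (hf.aestronglyMeasurable measurableSet_Ico) M
    (ae_restrict_of_forall_mem measurableSet_Ico hM)

theorem continuousOn_of_norm_sub_le_rpow {s : Set ℝ} {C α : ℝ} (hα : 0 < α)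
    (hf : ∀ θ ∈ s, ∀ θ' ∈ s, ‖f θ - f θ'‖ ≤ C * |θ - θ'| ^ α) : ContinuousOn f s := by
  intro θ₀ hθ₀
  rw [ContinuousWithinAt, tendsto_iff_norm_sub_tendsto_zero]
  have hbound : ContinuousAt (fun θ : ℝ => C * |θ - θ₀| ^ α) θ₀ :=
    continuousAt_const.mul
      ((continuous_abs.comp (continuous_sub_right θ₀)).continuousAt.rpow_const (.inr hα.le))
  refine squeeze_zero' (.of_forall fun _ => norm_nonneg _)
    (eventually_nhdsWithin_of_forall fun θ hθ => hf θ hθ θ₀ hθ₀) ?_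
  simpa [Real.zero_rpow hα.ne'] using hbound.tendsto.mono_left nhdsWithin_le_nhds

theorem norm_integral_two_mul_le_of_norm_add_shift_le [NormedSpace ℝ E] {a δ M : ℝ}
    (hδ : 0 ≤ δ) (hf : IntervalIntegrable f volume a (a + 2 * δ))
    (hM : ∀ θ ∈ Ico a (a + δ), ‖f θ + f (θ + δ)‖ ≤ M) :
    ‖∫ θ in a..a + 2 * δ, f θ‖ ≤ M * δ := by
  have hf₁ : IntervalIntegrable f volume a (a + δ) :=
    hf.mono_set (uIcc_subset_uIcc_left (mem_uIcc_of_le (by linarith) (by linarith)))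
  have hf₂ : IntervalIntegrable f volume (a + δ) (a + 2 * δ) :=
    hf.mono_set (uIcc_subset_uIcc_right (mem_uIcc_of_le (by linarith) (by linarith)))
  have hfolded : ∫ θ in a..a + 2 * δ, f θ = ∫ θ in a..a + δ, (f θ + f (θ + δ)) := by
    have hshift : ∫ θ in a + δ..a + 2 * δ, f θ = ∫ θ in a..a + δ, f (θ + δ) := by
      rw [intervalIntegral.integral_comp_add_right]; ring_nf
    rw [← intervalIntegral.integral_add_adjacent_intervals hf₁ hf₂, hshift,
      intervalIntegral.integral_add hf₁
        (by simpa [two_mul, ← add_assoc] using hf₂.comp_add_right δ)]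
  rw [hfolded, intervalIntegral.integral_of_le (by linarith),
    setIntegral_congr_set Ico_ae_eq_Ioc.symm]
  simpa [Real.volume_real_Ico_of_le, hδ] using
    norm_setIntegral_le_of_norm_le_const (μ := volume) measure_Ico_lt_top hM

theorem norm_integral_nat_mul_le_of_norm_add_shift_le [NormedSpace ℝ E] {δ M : ℝ} (hδ : 0 ≤ δ)
    (n : ℕ) (hf : IntervalIntegrable f volume 0 (n * (2 * δ)))
    (hM : ∀ θ, 0 ≤ θ → θ + δ < n * (2 * δ) → ‖f θ + f (θ + δ)‖ ≤ M) :
    ‖∫ θ in 0..n * (2 * δ), f θ‖ ≤ n * (M * δ) := by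
  induction n with
  | zero => simp
  | succ n ih =>
    have hsplit : ((n + 1 : ℕ) : ℝ) * (2 * δ) = n * (2 * δ) + 2 * δ := by push_cast; ring
    have hle : n * (2 * δ) ≤ ((n + 1 : ℕ) : ℝ) * (2 * δ) := by rw [hsplit]; linarith
    have hf₁ : IntervalIntegrable f volume 0 (n * (2 * δ)) :=
      hf.mono_set (uIcc_subset_uIcc_left (mem_uIcc_of_le (by positivity) hle))
    have hf₂ : IntervalIntegrable f volume (n * (2 * δ)) (n * (2 * δ) + 2 * δ) := by
      rw [← hsplit]
      exact hf.mono_set (uIcc_subset_uIcc_right (mem_uIcc_of_le (by positivity) hle))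
    rw [hsplit, ← intervalIntegral.integral_add_adjacent_intervals hf₁ hf₂]
    calc _ ≤ ‖∫ θ in 0..n * (2 * δ), f θ‖ + ‖∫ θ in n * (2 * δ)..n * (2 * δ) + 2 * δ, f θ‖ :=
          norm_add_le _ _
      _ ≤ n * (M * δ) + M * δ := by
          gcongr
          · exact ih hf₁ fun θ h₀ h => hM θ h₀ (h.trans_le hle)
          · refine norm_integral_two_mul_le_of_norm_add_shift_le hδ hf₂ fun θ hθ => hM θ ?_ ?_
            · linarith [hθ.1, show (0 : ℝ) ≤ n * (2 * δ) by positivity]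
            · rw [hsplit]; linarith [hθ.2]
      _ = _ := by push_cast; ring

end Integral

theorem exp_ofReal_add_pi_div_mul_I_pow (θ : ℝ) {n : ℕ} (hn : n ≠ 0) :
    exp (↑(θ + π / n) * I) ^ n = -exp (↑θ * I) ^ n := by
  rw [← exp_nat_mul, ← exp_nat_mul, show (n : ℂ) * (↑(θ + π / n) * I) = n * (θ * I) + π * I by
    push_cast; field_simp, exp_add, exp_pi_mul_I, mul_neg_one]

section InnerProduct

variable {H : Type*} [NormedAddCommGroup H] [InnerProductSpace ℂ H]

theorem norm_inner_mul_conj_inner_sub_le (x y : H) {u v : H} {B : ℝ} (hu : ‖u‖ ≤ B)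
    (hv : ‖v‖ ≤ B) :
    ‖inner ℂ x u * conj (inner ℂ y u) - inner ℂ x v * conj (inner ℂ y v)‖
      ≤ 2 * B * ‖x‖ * ‖y‖ * ‖u - v‖ := by
  have hsplit : inner ℂ x u * conj (inner ℂ y u) - inner ℂ x v * conj (inner ℂ y v)
      = inner ℂ x (u - v) * conj (inner ℂ y u) + inner ℂ x v * conj (inner ℂ y (u - v)) := by
    simp only [inner_sub_right, map_sub]; ring
  rw [hsplit]
  refine (norm_add_le _ _).trans ?_
  have hB : 0 ≤ B := (norm_nonneg u).trans hu
  have hxv : ‖inner ℂ x v‖ ≤ ‖x‖ * B := (norm_inner_le_norm x v).trans (by gcongr)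
  have hyu : ‖inner ℂ y u‖ ≤ ‖y‖ * B := (norm_inner_le_norm y u).trans (by gcongr)
  simp only [norm_mul, RCLike.norm_conj]
  calc _ ≤ ‖x‖ * ‖u - v‖ * (‖y‖ * B) + ‖x‖ * B * (‖y‖ * ‖u - v‖) := by
        gcongr <;> exact norm_inner_le_norm _ _
    _ = _ := by ring

theorem norm_exp_pow_mul_inner_mul_conj_inner_add_shift_le (x y : H) (u : ℝ → H) {B : ℝ}
    (hu : ∀ θ, ‖u θ‖ ≤ B) {n : ℕ} (hn : n ≠ 0) (θ : ℝ) :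
    ‖exp (↑θ * I) ^ n * inner ℂ x (u θ) * conj (inner ℂ y (u θ))
        + exp (↑(θ + π / n) * I) ^ n * inner ℂ x (u (θ + π / n))
          * conj (inner ℂ y (u (θ + π / n)))‖
      ≤ 2 * B * ‖x‖ * ‖y‖ * ‖u θ - u (θ + π / n)‖ := by
  rw [exp_ofReal_add_pi_div_mul_I_pow θ hn, neg_mul, neg_mul, ← sub_eq_add_neg, mul_assoc,
    mul_assoc, ← mul_sub, norm_mul, norm_pow, norm_exp_ofReal_mul_I, one_pow, one_mul]
  exact norm_inner_mul_conj_inner_sub_le x y (hu θ) (hu _)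

theorem intervalIntegrable_exp_pow_mul_inner_mul_conj_inner (x y : H) {u : ℝ → H} {a b B : ℝ}
    (hab : a ≤ b) (hcont : ContinuousOn u (Ico a b)) (hu : ∀ θ, ‖u θ‖ ≤ B) (n : ℕ) :
    IntervalIntegrable (fun θ : ℝ => exp (θ * I) ^ n * inner ℂ x (u θ) * conj (inner ℂ y (u θ)))
      volume a b := by
  have hB : 0 ≤ B := (norm_nonneg _).trans (hu 0)
  refine intervalIntegrable_of_continuousOn_Ico_of_norm_le (M := ‖x‖ * B * (‖y‖ * B)) hab
    (((continuous_exp.comp (by fun_prop)).pow n).continuousOn.mul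
      (continuousOn_const.inner hcont) |>.mul (continuousOn_const.inner hcont).star) fun θ _ => ?_
  simp only [norm_mul, norm_pow, norm_exp_ofReal_mul_I, one_pow, one_mul, RCLike.norm_conj]
  gcongr
  exacts [(norm_inner_le_norm x _).trans (mul_le_mul_of_nonneg_left (hu θ) (norm_nonneg _)),
    (norm_inner_le_norm y _).trans (mul_le_mul_of_nonneg_left (hu θ) (norm_nonneg _))]

end InnerProduct

/-- Proposition 2.9: speed of mixing `n^{-α}` for bounded linear functionals, for an
`α`-Hölderian bounded `𝕋`-eigenvector field `E`. The circle `𝕋` is parametrized by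
`θ ↦ exp(iθ)`, `θ ∈ [0, 2π)`, and `μ` is the normalized Lebesgue measure `dθ/(2π)`. -/
theorem stmt0 {H : Type*} [NormedAddCommGroup H] [InnerProductSpace ℂ H]
    (α : ℝ) (hα : α ∈ Set.Ioc (0 : ℝ) 1) (E : ℂ → H) (C B : ℝ)
    (hHol : ∀ θ θ' : ℝ, θ ∈ Set.Ico (0 : ℝ) (2 * π) → θ' ∈ Set.Ico (0 : ℝ) (2 * π) →
      ‖E (Complex.exp (θ * Complex.I)) - E (Complex.exp (θ' * Complex.I))‖ ≤ C * |θ - θ'| ^ α)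
    (hB : ∀ z : ℂ, ‖z‖ = 1 → ‖E z‖ ≤ B)
    (x y : H) (n : ℕ) (hn : 1 ≤ n) :
    ‖(((2 * π : ℝ)) : ℂ)⁻¹ * ∫ θ in (0 : ℝ)..(2 * π),
        (Complex.exp (θ * Complex.I)) ^ n
          * (inner ℂ x (E (Complex.exp (θ * Complex.I))) : ℂ)
          * (starRingEnd ℂ) (inner ℂ y (E (Complex.exp (θ * Complex.I))) : ℂ)‖
      ≤ B * C * π ^ α * ‖x‖ * ‖y‖ / (n : ℝ) ^ α := by
  have hn₀ : n ≠ 0 := by omega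
  have hu : ∀ θ : ℝ, ‖E (exp (θ * I))‖ ≤ B := fun θ => hB _ (norm_exp_ofReal_mul_I θ)
  have hB₀ : 0 ≤ B := (norm_nonneg _).trans (hu 0)
  have hδ : 0 < π / n := by positivity
  have h2π : 2 * π = n * (2 * (π / n)) := by field_simp
  have hint := intervalIntegrable_exp_pow_mul_inner_mul_conj_inner x y (by positivity)
    (continuousOn_of_norm_sub_le_rpow hα.1 fun θ hθ θ' hθ' => hHol θ θ' hθ hθ') hu n
  have hmain := norm_integral_nat_mul_le_of_norm_add_shift_le
    (M := 2 * B * ‖x‖ * ‖y‖ * (C * (π / n) ^ α)) hδ.le n (h2π ▸ hint) fun θ h₀ h =>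
      (norm_exp_pow_mul_inner_mul_conj_inner_add_shift_le x y _ hu hn₀ θ).trans <| by
        gcongr
        simpa [abs_of_pos hδ] using hHol θ (θ + π / n) ⟨h₀, by linarith⟩ ⟨by linarith, by linarith⟩
  rw [← h2π] at hmain
  rw [norm_mul, norm_inv, Complex.norm_real, Real.norm_of_nonneg (by positivity)]
  calc _ ≤ (2 * π)⁻¹ * (n * (2 * B * ‖x‖ * ‖y‖ * (C * (π / n) ^ α) * (π / n))) :=
        mul_le_mul_of_nonneg_left hmain (by positivity)
    _ = B * C * π ^ α * ‖x‖ * ‖y‖ / (n : ℝ) ^ α := by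
      rw [Real.div_rpow Real.pi_pos.le (Nat.cast_nonneg n)]
      field_simp
end

section
/- Let α ∈ (0,1). There exists a constant C > 0 such that for all complex numbers λ, ξ of modulus 1, Σ_{n=1}^∞ |λ^n − ξ^n|² / n^{2α+1} ≤ C·|λ − ξ|^{2α}. Equivalently, the 𝕋-eigenvector field E : 𝕋 → ℓ²(ℤ₊) defined by E(λ) = e₀ + Σ_{n≥1} (λ^n / n^{α+1/2}) e_n, where (e_n)_{n≥0} is the canonical orthonormal basis of ℓ²(ℤ₊), is α-Hölderian. -/
/-!
Write `δ = ‖λ - ξ‖`. Since `‖λⁿ - ξⁿ‖ ≤ min (n δ) 2`, the `n`-th term of the series is at most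
`δ² n^(1-2α)` and at most `4 n^(-(2α+1))`. Split the series at `N = ⌈1/δ⌉`: comparing with
integrals of `x ↦ x^β`, the first `N` terms sum to `O(δ² N^(2-2α))` and the tail to `O(N^(-2α))`,
both of which are `O(δ^(2α))`.
-/

open Finset

theorem norm_pow_sub_pow_le_of_norm_le_one {R : Type*} [NormedRing R] [NormOneClass R]
    {a b : R} (ha : ‖a‖ ≤ 1) (hb : ‖b‖ ≤ 1) (m : ℕ) :
    ‖a ^ m - b ^ m‖ ≤ m * ‖a - b‖ := by
  induction m with
  | zero => simp
  | succ k ih =>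
    have hsplit : a ^ (k + 1) - b ^ (k + 1) = a * (a ^ k - b ^ k) + (a - b) * b ^ k := by
      simp only [pow_succ']; noncomm_ring
    calc ‖a ^ (k + 1) - b ^ (k + 1)‖
        ≤ ‖a‖ * ‖a ^ k - b ^ k‖ + ‖a - b‖ * ‖b‖ ^ k := by
          rw [hsplit]
          refine (norm_add_le _ _).trans (add_le_add (norm_mul_le _ _) ?_)
          exact (norm_mul_le _ _).trans (by gcongr; exact norm_pow_le _ _)
      _ ≤ k * ‖a - b‖ + ‖a - b‖ := by
          refine add_le_add ((mul_le_of_le_one_left (norm_nonneg _) ha).trans ih) ?_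
          exact mul_le_of_le_one_right (norm_nonneg _) (pow_le_one₀ (norm_nonneg _) hb)
      _ = (k + 1 : ℕ) * ‖a - b‖ := by push_cast; ring

theorem sum_range_add_one_rpow_le {β : ℝ} (hβ : -1 < β) (N : ℕ) :
    ∑ i ∈ range N, ((i : ℝ) + 1) ^ β ≤ (1 + 1 / (β + 1)) * (N : ℝ) ^ (β + 1) := by
  have hβ1 : 0 < β + 1 := by linarith
  have hNβ : 0 ≤ (N : ℝ) ^ (β + 1) := by positivity
  rcases le_or_gt 0 β with hβ0 | hβ0
  · calc ∑ i ∈ range N, ((i : ℝ) + 1) ^ β ≤ ∑ _i ∈ range N, (N : ℝ) ^ β := by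
          refine sum_le_sum fun i hi => ?_
          have : (i : ℝ) + 1 ≤ N := by exact_mod_cast mem_range.1 hi
          gcongr
      _ = (N : ℝ) ^ (β + 1) := by
          rw [sum_const, card_range, nsmul_eq_mul, Real.rpow_add_one' (Nat.cast_nonneg N) hβ1.ne']
          ring
      _ ≤ _ := le_mul_of_one_le_left hNβ (by simp only [le_add_iff_nonneg_right]; positivity)
  · -- `x ^ β` is not antitone on `[0, 1]` since `0 ^ β = 0`, so the first term is split off.
    obtain _ | M := N
    · simp [Real.zero_rpow hβ1.ne']
    have hanti : AntitoneOn (fun x : ℝ => x ^ β) (Set.Icc 1 (1 + M)) := fun x hx y _ hxy =>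
      Real.rpow_le_rpow_of_nonpos (zero_lt_one.trans_le hx.1) hxy hβ0.le
    have hM : (1 : ℝ) ≤ ((M + 1 : ℕ) : ℝ) ^ (β + 1) := Real.one_le_rpow (by simp) hβ1.le
    calc ∑ i ∈ range (M + 1), ((i : ℝ) + 1) ^ β
        = ∑ i ∈ range M, (1 + ((i + 1 : ℕ) : ℝ)) ^ β + 1 := by
          rw [sum_range_succ']; push_cast; simp only [zero_add, Real.one_rpow]; ring_nf
      _ ≤ (∫ x in (1 : ℝ)..(1 + M), x ^ β) + 1 := by gcongr; exact hanti.sum_le_integral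
      _ = (((M + 1 : ℕ) : ℝ) ^ (β + 1) - 1) / (β + 1) + 1 := by
          rw [integral_rpow (Or.inl hβ), Real.one_rpow]; push_cast; ring_nf
      _ ≤ ((M + 1 : ℕ) : ℝ) ^ (β + 1) / (β + 1) + ((M + 1 : ℕ) : ℝ) ^ (β + 1) := by
          gcongr; linarith
      _ = _ := by ring

theorem sum_range_add_nat_add_one_rpow_neg_le {p x : ℝ} (hp : 1 < p) (hx : 0 < x) (k : ℕ) :
    ∑ i ∈ range k, (x + i + 1) ^ (-p) ≤ x ^ (1 - p) / (p - 1) := by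
  have hanti : AntitoneOn (fun y : ℝ => y ^ (-p)) (Set.Icc x (x + k)) := fun y hy z _ hyz =>
    Real.rpow_le_rpow_of_nonpos (hx.trans_le hy.1) hyz (by linarith)
  have h0 : (0 : ℝ) ∉ Set.uIcc x (x + k) := by
    rw [Set.uIcc_of_le (by simp)]
    exact fun h => hx.not_ge h.1
  calc ∑ i ∈ range k, (x + i + 1) ^ (-p) ≤ ∫ y in x..x + k, y ^ (-p) := by
        simpa [add_assoc] using hanti.sum_le_integral
    _ = (x ^ (1 - p) - (x + k) ^ (1 - p)) / (p - 1) := by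
        rw [integral_rpow (Or.inr ⟨by linarith, h0⟩), neg_add_eq_sub, ← neg_sub p 1, div_neg,
          ← neg_div, neg_sub]
    _ ≤ x ^ (1 - p) / (p - 1) := by
        gcongr
        exact sub_le_self _ (by positivity)

section

variable {f : ℕ → ℝ} {c : ℝ}

theorem sum_range_le_of_le_rpow {β : ℝ} (hβ : -1 < β) (hc : 0 ≤ c)
    (hf : ∀ n, f n ≤ c * ((n : ℝ) + 1) ^ β) (N : ℕ) :
    ∑ i ∈ range N, f i ≤ c * ((1 + 1 / (β + 1)) * (N : ℝ) ^ (β + 1)) := by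
  calc ∑ i ∈ range N, f i ≤ c * ∑ i ∈ range N, ((i : ℝ) + 1) ^ β := by
        rw [mul_sum]; exact sum_le_sum fun i _ => hf i
    _ ≤ _ := by gcongr; exact sum_range_add_one_rpow_le hβ N

theorem tsum_nat_add_le_of_le_rpow_neg {p : ℝ} (hp : 1 < p) (hc : 0 ≤ c) (hf0 : ∀ n, 0 ≤ f n)
    (hf : ∀ n, f n ≤ c * ((n : ℝ) + 1) ^ (-p)) {N : ℕ} (hN : 0 < N) :
    ∑' i, f (i + N) ≤ c * ((N : ℝ) ^ (1 - p) / (p - 1)) := by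
  refine Real.tsum_le_of_sum_range_le (fun i => hf0 _) fun k => ?_
  calc ∑ i ∈ range k, f (i + N) ≤ c * ∑ i ∈ range k, ((N : ℝ) + i + 1) ^ (-p) := by
        rw [mul_sum]
        refine sum_le_sum fun i _ => (hf (i + N)).trans_eq ?_
        push_cast; ring_nf
    _ ≤ _ := by
        gcongr
        exact sum_range_add_nat_add_one_rpow_neg_le hp (by exact_mod_cast hN) k

end

theorem exists_tsum_sq_div_rpow_le {s : ℝ} (hs : s ∈ Set.Ioo 0 2) {M : ℝ} (hM : 0 ≤ M) :
    ∃ C > 0, ∀ (δ : ℝ) (a : ℕ → ℝ), 0 ≤ δ → δ ≤ M → (∀ n, 0 ≤ a n) →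
      (∀ n, a n ≤ (n + 1) * δ) → (∀ n, a n ≤ M) →
      ∑' n, a n ^ 2 / ((n : ℝ) + 1) ^ (s + 1) ≤ C * δ ^ s := by
  obtain ⟨hs0, hs2⟩ := hs
  have hs2' : 0 < 2 - s := by linarith
  set K := 1 + 1 / (2 - s)
  refine ⟨K * (1 + M) ^ (2 - s) + M ^ 2 / s, by positivity, ?_⟩
  intro δ a hδ0 hδM ha0 haδ haM
  set f : ℕ → ℝ := fun n => a n ^ 2 / ((n : ℝ) + 1) ^ (s + 1)
  have hf_nonneg : ∀ n, 0 ≤ f n := fun n => by positivity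
  have hf_head : ∀ n, f n ≤ δ ^ 2 * ((n : ℝ) + 1) ^ (1 - s) := fun n => by
    have hn : (0 : ℝ) < n + 1 := by positivity
    calc f n ≤ ((n + 1) * δ) ^ 2 / ((n : ℝ) + 1) ^ (s + 1) := by
          dsimp only [f]; gcongr; exacts [ha0 n, haδ n]
      _ = δ ^ 2 * ((n : ℝ) + 1) ^ (1 - s) := by
          rw [show (1 : ℝ) - s = 2 - (s + 1) by ring, Real.rpow_sub hn, Real.rpow_two]; ring
  have hf_tail : ∀ n, f n ≤ M ^ 2 * ((n : ℝ) + 1) ^ (-(s + 1)) := fun n => by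
    dsimp only [f]
    rw [Real.rpow_neg (by positivity), ← div_eq_mul_inv]
    gcongr; exacts [ha0 n, haM n]
  have hf : Summable f := by
    refine .of_nonneg_of_le hf_nonneg hf_tail (Summable.mul_left _ ?_)
    exact_mod_cast (summable_nat_add_iff 1).2 (Real.summable_nat_rpow.2 (by linarith))
  rcases hδ0.eq_or_lt with rfl | hδ
  · refine (tsum_nonpos fun n => ?_).trans_eq (by simp [Real.zero_rpow hs0.ne'])
    simpa using hf_head n
  set N := ⌈1 / δ⌉₊
  have hNδ : 1 / δ ≤ N := Nat.le_ceil _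
  have hN0 : 0 < N := Nat.cast_pos.1 ((by positivity : (0 : ℝ) < 1 / δ).trans_le hNδ)
  have hNM : (N : ℝ) ≤ (1 + M) / δ := by
    have := Nat.ceil_lt_add_one (by positivity : (0 : ℝ) ≤ 1 / δ)
    rw [add_div]
    linarith [(one_le_div hδ).2 hδM]
  have hNs : (N : ℝ) ^ (-s) ≤ δ ^ s := by
    calc (N : ℝ) ^ (-s) ≤ (1 / δ) ^ (-s) :=
          Real.rpow_le_rpow_of_nonpos (by positivity) hNδ (by linarith)
      _ = δ ^ s := by rw [one_div, Real.inv_rpow hδ.le, Real.rpow_neg hδ.le, inv_inv]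
  have hhead := sum_range_le_of_le_rpow (by linarith) (sq_nonneg δ) hf_head N
  have htail := tsum_nat_add_le_of_le_rpow_neg (by linarith) (sq_nonneg M) hf_nonneg hf_tail hN0
  rw [show 1 - s + 1 = 2 - s by ring] at hhead
  rw [show 1 - (s + 1) = -s by ring, add_sub_cancel_right] at htail
  calc ∑' n, f n = ∑ i ∈ range N, f i + ∑' i, f (i + N) := (hf.sum_add_tsum_nat_add N).symm
    _ ≤ δ ^ 2 * (K * ((1 + M) / δ) ^ (2 - s)) + M ^ 2 * (δ ^ s / s) := by
        gcongr
        · exact hhead.trans (by gcongr)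
        · exact htail.trans (by gcongr)
    _ = K * (1 + M) ^ (2 - s) * (δ ^ (2 : ℝ) / δ ^ (2 - s)) + M ^ 2 / s * δ ^ s := by
        rw [Real.div_rpow (by linarith) hδ.le, Real.rpow_two]
        ring
    _ = (K * (1 + M) ^ (2 - s) + M ^ 2 / s) * δ ^ s := by
        rw [← Real.rpow_sub hδ, sub_sub_cancel]
        ring

/-- Upper bound half of Theorem 2.10: for `α ∈ (0,1)` there is `C > 0` such that for all
unimodular `λ, ξ`, `Σ_{n≥1} |λ^n − ξ^n|²/n^{2α+1} ≤ C·|λ−ξ|^{2α}`; i.e. the eigenvector field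
`E(λ) = e₀ + Σ_{n≥1} (λ^n/n^{α+1/2}) e_n` of the weighted backward shift is `α`-Hölderian. -/
theorem stmt1 (α : ℝ) (hα : α ∈ Set.Ioo (0 : ℝ) 1) :
    ∃ C > (0 : ℝ), ∀ lam xi : ℂ, ‖lam‖ = 1 → ‖xi‖ = 1 →
      ∑' n : ℕ, (‖lam ^ (n + 1) - xi ^ (n + 1)‖) ^ 2 / ((n : ℝ) + 1) ^ (2 * α + 1)
        ≤ C * (‖lam - xi‖) ^ (2 * α) := by
  obtain ⟨C, hC, hsum⟩ :=
    exists_tsum_sq_div_rpow_le (s := 2 * α) ⟨by linarith [hα.1], by linarith [hα.2]⟩ zero_le_two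
  have norm_sub_le_two : ∀ {u v : ℂ}, ‖u‖ = 1 → ‖v‖ = 1 → ‖u - v‖ ≤ 2 := fun hu hv =>
    (norm_sub_le _ _).trans (by rw [hu, hv]; norm_num)
  refine ⟨C, hC, fun lam xi hlam hxi => hsum _ _ (norm_nonneg _) (norm_sub_le_two hlam hxi)
    (fun n => norm_nonneg _) (fun n => ?_)
    (fun n => norm_sub_le_two (by simp [hlam]) (by simp [hxi]))⟩
  exact_mod_cast norm_pow_sub_pow_le_of_norm_le_one hlam.le hxi.le (n + 1)
end

section
/- Let α ∈ (0,1). There exists a constant c > 0 such that for every even integer N ≥ 2, Σ_{n=1}^∞ |e^{iπn/N} − 1|² / n^{2α+1} ≥ c·|e^{iπ/N} − 1|^{2α}. Consequently, the map E : 𝕋 → ℓ²(ℤ₊) given by E(λ) = e₀ + Σ_{n≥1} (λ^n / n^{α+1/2}) e_n is not β-Hölderian for any β > α: for every β > α there is no constant C > 0 with Σ_{n=1}^∞ |λ^n − ξ^n|²/n^{2α+1} ≤ C·|λ − ξ|^{2β} for all λ, ξ on the unit circle. -/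
/-!
With `λ_N = e^{iπ/N}`, the terms `N ≤ n ≤ 3N/2` of the series have angle `πn/N ∈ [π, 3π/2]`, so
`|λ_N^n - 1|² ≥ 2`; these `≈ N/2` terms contribute at least `N / (2N)^{2α+1} ≍ N^{-2α}`, while the
chord `|λ_N - 1|` is at most the arc `π/N`. A Hölder bound `≤ C|λ_N - 1|^{2β}` would then give
`c ≤ C |λ_N - 1|^{2(β-α)} → 0`.
-/

open scoped Real
open Complex Filter Topology

namespace Complex

lemma norm_exp_pi_div_mul_I_sub_one_le (N : ℕ) :
    ‖exp (((π / N : ℝ) : ℂ) * I) - 1‖ ≤ π / N := by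
  simpa [mul_comm, abs_of_pos Real.pi_pos] using
    Real.norm_exp_I_mul_ofReal_sub_one_le (x := π / N)

lemma norm_exp_pi_div_mul_I_sub_one_pos {N : ℕ} (hN : 1 ≤ N) :
    0 < ‖exp (((π / N : ℝ) : ℂ) * I) - 1‖ := by
  have hN : (1 : ℝ) ≤ N := by exact_mod_cast hN
  have hlt : π / N / 2 < π := by
    rw [div_lt_iff₀ two_pos, div_lt_iff₀ (by positivity)]
    nlinarith [Real.pi_pos]
  have hsin : 0 < Real.sin (π / N / 2) := Real.sin_pos_of_pos_of_lt_pi (by positivity) hlt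
  rw [mul_comm, norm_exp_I_mul_ofReal_sub_one, Real.norm_eq_abs, abs_of_pos (by positivity)]
  positivity

lemma two_le_norm_exp_ofReal_mul_I_sub_one_sq {θ : ℝ} (hlo : π / 2 ≤ θ) (hhi : θ ≤ 3 * π / 2) :
    2 ≤ ‖exp (θ * I) - 1‖ ^ 2 := by
  rw [mul_comm, norm_exp_I_mul_ofReal_sub_one, Real.norm_eq_abs, sq_abs, mul_pow,
    Real.sin_sq_eq_half_sub, mul_div_cancel₀ _ two_ne_zero]
  have : Real.cos θ ≤ 0 := Real.cos_nonpos_of_pi_div_two_le_of_le hlo (by linarith)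
  linarith

end Complex

lemma summable_div_nat_add_one_rpow {g : ℕ → ℝ} {M p : ℝ} (hg0 : ∀ n, 0 ≤ g n)
    (hgM : ∀ n, g n ≤ M) (hp : 1 < p) : Summable fun n : ℕ => g n / ((n : ℝ) + 1) ^ p := by
  have hs : Summable fun n : ℕ => 1 / ((n : ℝ) + 1) ^ p := by
    refine ((Real.summable_one_div_nat_add_rpow 1 p).mpr hp).congr fun n => ?_
    rw [abs_of_nonneg (by positivity)]
  refine (hs.mul_left M).of_nonneg_of_le (fun n => by have := hg0 n; positivity) fun n => ?_
  rw [mul_one_div]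
  gcongr
  exact hgM n

lemma inv_two_mul_rpow_le_tsum_norm_exp_sub_one_sq {p : ℝ} (hp : 1 < p) {N : ℕ} (hN : 1 ≤ N) :
    (2 * (2 * (N : ℝ)) ^ (p - 1))⁻¹ ≤ ∑' n : ℕ,
      ‖exp (((π * ((n : ℝ) + 1) / N : ℝ) : ℂ) * I) - 1‖ ^ 2 / ((n : ℝ) + 1) ^ p := by
  have hNpos : (0 : ℝ) < N := by exact_mod_cast hN
  have hsum : Summable fun n : ℕ =>
      ‖exp (((π * ((n : ℝ) + 1) / N : ℝ) : ℂ) * I) - 1‖ ^ 2 / ((n : ℝ) + 1) ^ p :=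
    summable_div_nat_add_one_rpow (M := 2 ^ 2) (fun _ => by positivity) (fun n => by
      gcongr
      exact (norm_sub_le _ _).trans (by rw [norm_exp_ofReal_mul_I, norm_one]; norm_num)) hp
  -- the block `N ≤ n + 1 ≤ 3N/2`, on which the angle lies in `[π, 3π/2]`
  set S := Finset.Ico (N - 1) (N + N / 2)
  have hterm : ∀ n ∈ S, 2 / (2 * (N : ℝ)) ^ p ≤
      ‖exp (((π * ((n : ℝ) + 1) / N : ℝ) : ℂ) * I) - 1‖ ^ 2 / ((n : ℝ) + 1) ^ p := by
    intro n hn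
    obtain ⟨hn1, hn2⟩ := Finset.mem_Ico.mp hn
    have hlo : (N : ℝ) ≤ n + 1 := by exact_mod_cast (by omega : N ≤ n + 1)
    have hhi : (n : ℝ) + 1 ≤ 3 * N / 2 := by
      have hcast : ((n + 1 : ℕ) : ℝ) ≤ N + ((N / 2 : ℕ) : ℝ) := by
        exact_mod_cast (by omega : n + 1 ≤ N + N / 2)
      have hdiv : ((N / 2 : ℕ) : ℝ) ≤ N / 2 := Nat.cast_div_le
      push_cast at hcast
      linarith
    gcongr
    · apply Complex.two_le_norm_exp_ofReal_mul_I_sub_one_sq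
      · rw [le_div_iff₀ hNpos]; nlinarith [Real.pi_pos]
      · rw [div_le_iff₀ hNpos]; nlinarith [Real.pi_pos]
    · linarith
  have hcard : (N : ℝ) / 2 ≤ S.card := by
    rw [Nat.card_Ico, div_le_iff₀ two_pos]
    exact_mod_cast (by omega : N ≤ (N + N / 2 - (N - 1)) * 2)
  calc (2 * (2 * (N : ℝ)) ^ (p - 1))⁻¹ = (N : ℝ) / 2 * (2 / (2 * (N : ℝ)) ^ p) := by
        rw [Real.rpow_sub_one (by positivity)]
        field_simp
    _ ≤ S.card * (2 / (2 * (N : ℝ)) ^ p) := by gcongr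
    _ ≤ ∑ n ∈ S, ‖exp (((π * ((n : ℝ) + 1) / N : ℝ) : ℂ) * I) - 1‖ ^ 2 / ((n : ℝ) + 1) ^ p := by
        simpa using Finset.card_nsmul_le_sum S _ _ hterm
    _ ≤ _ := hsum.sum_le_tsum S fun n _ => by positivity

lemma eventually_mul_rpow_lt_mul_rpow {ι : Type*} {l : Filter ι} {r : ι → ℝ}
    (hr0 : ∀ᶠ i in l, 0 < r i) (hr : Tendsto r l (𝓝 0)) {α β c : ℝ} (hc : 0 < c) (hαβ : α < β)
    (C : ℝ) : ∀ᶠ i in l, C * r i ^ β < c * r i ^ α := by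
  have hlim : Tendsto (fun i => C * r i ^ (β - α)) l (𝓝 0) := by
    simpa [Real.zero_rpow (sub_ne_zero.mpr hαβ.ne')] using
      (hr.rpow_const (Or.inr (sub_nonneg.mpr hαβ.le))).const_mul C
  filter_upwards [hr0, hlim.eventually (gt_mem_nhds hc)] with i hri hlt
  calc C * r i ^ β = C * r i ^ (β - α) * r i ^ α := by
        rw [mul_assoc, ← Real.rpow_add hri, sub_add_cancel]
    _ < c * r i ^ α := by gcongr

lemma mul_norm_exp_pi_div_sub_one_rpow_le_tsum {α : ℝ} (hα : 0 < α) {N : ℕ} (hN : 1 ≤ N) :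
    (2 * (2 * π) ^ (2 * α))⁻¹ * ‖exp (((π / N : ℝ) : ℂ) * I) - 1‖ ^ (2 * α) ≤ ∑' n : ℕ,
      ‖exp (((π * ((n : ℝ) + 1) / N : ℝ) : ℂ) * I) - 1‖ ^ 2 / ((n : ℝ) + 1) ^ (2 * α + 1) := by
  have hNpos : (0 : ℝ) < N := by exact_mod_cast hN
  have hscale : (2 * π) ^ (2 * α) = (2 * (N : ℝ)) ^ (2 * α) * (π / N) ^ (2 * α) := by
    rw [← Real.mul_rpow (by positivity) (by positivity)]
    field_simp
  calc _ ≤ (2 * (2 * π) ^ (2 * α))⁻¹ * (π / N) ^ (2 * α) := by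
        gcongr
        exact norm_exp_pi_div_mul_I_sub_one_le N
    _ = (2 * (2 * (N : ℝ)) ^ (2 * α + 1 - 1))⁻¹ := by
        rw [add_sub_cancel_right, hscale]
        have : 0 < (π / N) ^ (2 * α) := by positivity
        field_simp
    _ ≤ _ := inv_two_mul_rpow_le_tsum_norm_exp_sub_one_sq (by linarith) hN

/-- Sharpness half of Theorem 2.10: for `α ∈ (0,1)`, testing at `λ_N = e^{iπ/N}` shows that
`Σ_{n≥1} |λ_N^n − 1|²/n^{2α+1} ≥ c·|λ_N − 1|^{2α}` for every even `N ≥ 2`, and consequently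
the eigenvector field `E(λ) = e₀ + Σ_{n≥1} (λ^n/n^{α+1/2}) e_n` is not `β`-Hölderian for any
`β > α`. -/
theorem stmt2 (α : ℝ) (hα : α ∈ Set.Ioo (0 : ℝ) 1) :
    (∃ c > (0 : ℝ), ∀ N : ℕ, Even N → 2 ≤ N →
      c * (‖Complex.exp (((π / N : ℝ) : ℂ) * Complex.I) - 1‖) ^ (2 * α)
        ≤ ∑' n : ℕ,
            (‖Complex.exp (((π * ((n : ℝ) + 1) / N : ℝ) : ℂ) * Complex.I) - 1‖) ^ 2
              / ((n : ℝ) + 1) ^ (2 * α + 1))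
    ∧ ∀ β : ℝ, α < β →
        ¬ ∃ C > (0 : ℝ), ∀ lam xi : ℂ, ‖lam‖ = 1 → ‖xi‖ = 1 →
          ∑' n : ℕ, (‖lam ^ (n + 1) - xi ^ (n + 1)‖) ^ 2 / ((n : ℝ) + 1) ^ (2 * α + 1)
            ≤ C * (‖lam - xi‖) ^ (2 * β) := by
  refine ⟨⟨_, by positivity, fun N _ hN =>
    mul_norm_exp_pi_div_sub_one_rpow_le_tsum hα.1 (by omega)⟩, ?_⟩
  rintro β hβ ⟨C, -, hC⟩
  set r : ℕ → ℝ := fun N => ‖exp (((π / N : ℝ) : ℂ) * I) - 1‖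
  have hr0 : ∀ᶠ N in atTop, 0 < r N :=
    (eventually_ge_atTop 1).mono fun _ => norm_exp_pi_div_mul_I_sub_one_pos
  have hr : Tendsto r atTop (𝓝 0) := squeeze_zero (fun _ => norm_nonneg _)
    norm_exp_pi_div_mul_I_sub_one_le (tendsto_const_div_atTop_nhds_zero_nat π)
  -- test the Hölder bound at `λ = exp (iπ/N)`, `ξ = 1`
  have hholder : ∃ᶠ N in atTop,
      (2 * (2 * π) ^ (2 * α))⁻¹ * r N ^ (2 * α) ≤ C * r N ^ (2 * β) := by
    refine frequently_atTop.mpr fun a => ⟨a + 1, by omega, ?_⟩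
    have hpow : ∀ n : ℕ, exp (((π / (a + 1 : ℕ) : ℝ) : ℂ) * I) ^ (n + 1) - 1 ^ (n + 1)
        = exp (((π * ((n : ℝ) + 1) / (a + 1 : ℕ) : ℝ) : ℂ) * I) - 1 := fun n => by
      rw [one_pow, ← exp_nat_mul]
      push_cast
      ring_nf
    calc _ ≤ _ := mul_norm_exp_pi_div_sub_one_rpow_le_tsum hα.1 (by omega)
      _ = _ := by simp only [← hpow]
      _ ≤ _ := hC _ 1 (norm_exp_ofReal_mul_I _) norm_one
  have hsmall := eventually_mul_rpow_lt_mul_rpow hr0 hr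
    (by positivity : 0 < (2 * (2 * π) ^ (2 * α))⁻¹) (by linarith : 2 * α < 2 * β) C
  obtain ⟨N, hle, hlt⟩ := (hholder.and_eventually hsmall).exists
  exact hle.not_gt hlt
end

section
/- Let H be a complex Hilbert space whose inner product ⟨·,·⟩ is conjugate-linear in the first variable, and let m be a Borel probability measure on H such that for every x ∈ H the function z ↦ ⟨x, z⟩ is square-integrable with respect to m, and such that m is invariant under the map z ↦ i·z. Then for all x, y ∈ H: ∫_H Re⟨x,z⟩·Re⟨y,z⟩ dm(z) = ∫_H Im⟨x,z⟩·Im⟨y,z⟩ dm(z) = (1/2)·Re(∫_H ⟨x,z⟩·conj(⟨y,z⟩) dm(z)), and ∫_H Im⟨x,z⟩·Re⟨y,z⟩ dm(z) = − ∫_H Re⟨x,z⟩·Im⟨y,z⟩ dm(z) = (1/2)·Im(∫_H ⟨x,z⟩·conj(⟨y,z⟩) dm(z)). -/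
/-!
Since `⟨x, i z⟩ = i ⟨x, z⟩`, the rotation `z ↦ i z` sends `(Re⟨x,z⟩, Im⟨x,z⟩)` to
`(-Im⟨x,z⟩, Re⟨x,z⟩)`; invariance of `m` under it therefore identifies `∫ Re·Re` with `∫ Im·Im`
and `∫ Im·Re` with `-∫ Re·Im`. Expanding `Re` and `Im` of `∫ ⟨x,z⟩ conj⟨y,z⟩` into these
integrals (all finite by Cauchy–Schwarz in `L²`) gives the two factors `1/2`.
-/

open MeasureTheory ComplexConjugate

section Rotation

variable {E : Type*} [AddCommGroup E] [Module ℂ E] [MeasurableSpace E] [MeasurableConstSMul ℂ E]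
  {m : Measure E}

theorem integral_comp_I_smul {F : Type*} [NormedAddCommGroup F] [NormedSpace ℝ F]
    (hinv : Measure.map (Complex.I • ·) m = m) (g : E → F) :
    ∫ z, g (Complex.I • z) ∂m = ∫ z, g z ∂m :=
  MeasurePreserving.integral_comp' (f := MeasurableEquiv.smul₀ Complex.I Complex.I_ne_zero)
    ⟨MeasurableEquiv.measurable _, hinv⟩ g

theorem integral_re_mul_re_eq_integral_im_mul_im (hinv : Measure.map (Complex.I • ·) m = m)
    (f g : E →ₗ[ℂ] ℂ) :
    ∫ z, (f z).re * (g z).re ∂m = ∫ z, (f z).im * (g z).im ∂m := by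
  rw [← integral_comp_I_smul hinv]
  simp [mul_comm Complex.I]

theorem integral_im_mul_re_eq_neg_integral_re_mul_im (hinv : Measure.map (Complex.I • ·) m = m)
    (f g : E →ₗ[ℂ] ℂ) :
    ∫ z, (f z).im * (g z).re ∂m = -∫ z, (f z).re * (g z).im ∂m := by
  rw [← integral_comp_I_smul hinv, ← integral_neg]
  simp [mul_comm Complex.I]

end Rotation

section MulConj

variable {α : Type*} [MeasurableSpace α] {μ : Measure α} {u v : α → ℂ}

theorem re_integral_mul_conj (hu : MemLp u 2 μ) (hv : MemLp v 2 μ) :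
    (∫ z, u z * conj (v z) ∂μ).re =
      ∫ z, (u z).re * (v z).re ∂μ + ∫ z, (u z).im * (v z).im ∂μ := by
  have huv : Integrable (fun z ↦ u z * conj (v z)) μ := hu.integrable_mul hv.star
  have hrr : Integrable (fun z ↦ (u z).re * (v z).re) μ := hu.re.integrable_mul hv.re
  have hii : Integrable (fun z ↦ (u z).im * (v z).im) μ := hu.im.integrable_mul hv.im
  rw [← integral_add hrr hii, ← RCLike.re_to_complex, ← integral_re huv]
  simp

theorem im_integral_mul_conj (hu : MemLp u 2 μ) (hv : MemLp v 2 μ) :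
    (∫ z, u z * conj (v z) ∂μ).im =
      ∫ z, (u z).im * (v z).re ∂μ - ∫ z, (u z).re * (v z).im ∂μ := by
  have huv : Integrable (fun z ↦ u z * conj (v z)) μ := hu.integrable_mul hv.star
  have hir : Integrable (fun z ↦ (u z).im * (v z).re) μ := hu.im.integrable_mul hv.re
  have hri : Integrable (fun z ↦ (u z).re * (v z).im) μ := hu.re.integrable_mul hv.im
  rw [← integral_sub hir hri, ← RCLike.im_to_complex, ← integral_im huv]
  simp [sub_eq_neg_add]

end MulConj

theorem stmt4_general {H : Type*} [NormedAddCommGroup H] [InnerProductSpace ℂ H]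
    [MeasurableSpace H] [BorelSpace H]
    (m : Measure H)
    (hL2 : ∀ x : H, MemLp (fun z : H => (inner ℂ x z : ℂ)) 2 m)
    (hinv : Measure.map (fun z : H => (Complex.I : ℂ) • z) m = m)
    (x y : H) :
    ((∫ z, (inner ℂ x z : ℂ).re * (inner ℂ y z : ℂ).re ∂m)
        = ∫ z, (inner ℂ x z : ℂ).im * (inner ℂ y z : ℂ).im ∂m)
    ∧ ((∫ z, (inner ℂ x z : ℂ).re * (inner ℂ y z : ℂ).re ∂m)
        = (1 / 2) * (∫ z, (inner ℂ x z : ℂ) * (starRingEnd ℂ) (inner ℂ y z : ℂ) ∂m).re)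
    ∧ ((∫ z, (inner ℂ x z : ℂ).im * (inner ℂ y z : ℂ).re ∂m)
        = - ∫ z, (inner ℂ x z : ℂ).re * (inner ℂ y z : ℂ).im ∂m)
    ∧ ((∫ z, (inner ℂ x z : ℂ).im * (inner ℂ y z : ℂ).re ∂m)
        = (1 / 2) * (∫ z, (inner ℂ x z : ℂ) * (starRingEnd ℂ) (inner ℂ y z : ℂ) ∂m).im) := by
  have hre_re : ∫ z, (inner ℂ x z : ℂ).re * (inner ℂ y z : ℂ).re ∂m
      = ∫ z, (inner ℂ x z : ℂ).im * (inner ℂ y z : ℂ).im ∂m :=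
    integral_re_mul_re_eq_integral_im_mul_im hinv (innerₛₗ ℂ x) (innerₛₗ ℂ y)
  have him_re : ∫ z, (inner ℂ x z : ℂ).im * (inner ℂ y z : ℂ).re ∂m
      = -∫ z, (inner ℂ x z : ℂ).re * (inner ℂ y z : ℂ).im ∂m :=
    integral_im_mul_re_eq_neg_integral_re_mul_im hinv (innerₛₗ ℂ x) (innerₛₗ ℂ y)
  refine ⟨hre_re, ?_, him_re, ?_⟩
  · rw [re_integral_mul_conj (hL2 x) (hL2 y), ← hre_re]
    ring
  · rw [im_integral_mul_conj (hL2 x) (hL2 y), him_re]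
    ring

/-- Lemma 3.2 (rotation invariance of a Gaussian measure): if `m` is a Borel probability
measure on a complex Hilbert space `H` which is invariant under `z ↦ i·z` and such that all
functionals `z ↦ ⟨x,z⟩` are square-integrable, then the covariances of the real and imaginary
parts of the functionals are given by `(1/2)Re⟨Rx,y⟩` and `(1/2)Im⟨Rx,y⟩`. -/
theorem stmt4 {H : Type*} [NormedAddCommGroup H] [InnerProductSpace ℂ H]
    [MeasurableSpace H] [BorelSpace H]
    (m : Measure H) [IsProbabilityMeasure m]
    (hL2 : ∀ x : H, MemLp (fun z : H => (inner ℂ x z : ℂ)) 2 m)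
    (hinv : Measure.map (fun z : H => (Complex.I : ℂ) • z) m = m)
    (x y : H) :
    ((∫ z, (inner ℂ x z : ℂ).re * (inner ℂ y z : ℂ).re ∂m)
        = ∫ z, (inner ℂ x z : ℂ).im * (inner ℂ y z : ℂ).im ∂m)
    ∧ ((∫ z, (inner ℂ x z : ℂ).re * (inner ℂ y z : ℂ).re ∂m)
        = (1 / 2) * (∫ z, (inner ℂ x z : ℂ) * (starRingEnd ℂ) (inner ℂ y z : ℂ) ∂m).re)
    ∧ ((∫ z, (inner ℂ x z : ℂ).im * (inner ℂ y z : ℂ).re ∂m)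
        = - ∫ z, (inner ℂ x z : ℂ).re * (inner ℂ y z : ℂ).im ∂m)
    ∧ ((∫ z, (inner ℂ x z : ℂ).im * (inner ℂ y z : ℂ).re ∂m)
        = (1 / 2) * (∫ z, (inner ℂ x z : ℂ) * (starRingEnd ℂ) (inner ℂ y z : ℂ) ∂m).im) :=
  stmt4_general m hL2 hinv x y
end

section
/- Let H be a separable complex Hilbert space with orthonormal basis (e_k)_{k≥1} and inner product conjugate-linear in the first variable, and let E : 𝕋 → H be a bounded Bochner-measurable map such that the scalar functions λ ↦ ⟨e_k, E(λ)⟩ are pairwise orthogonal in L²(𝕋, μ) and ∫_𝕋 |⟨e_k, E(λ)⟩|² dμ(λ) = 2σ_k² with σ_k > 0 for every k. Then for every integer n ≥ 1, Σ_{k=1}^∞ (1/(2σ_k²)) · ‖ ∫_𝕋 λ^n · conj(⟨e_k, E(λ)⟩) · E(λ) dμ(λ) ‖² ≤ ‖E‖₂², where ‖E‖₂² := ∫_𝕋 ‖E(λ)‖² dμ(λ) and the inner integrals are Bochner integrals in H. -/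
/-!
Put `f_k(λ) = ⟨e_k, E(λ)⟩`. Since `|λⁿ| = 1`, the functions `ω_k = λ̄ⁿ f_k / (σ_k √2)` are
orthonormal in `L²(𝕋)`, and the `k`-th vector in the sum is `σ_k √2 ∫ ω̄_k • E`. For any Hilbert
basis `(b_j)` of `H`, the functions `ω_k • b_j` are orthonormal in `L²(𝕋; H)` and the coefficient of
`E` along `ω_k • b_j` is `⟨b_j, ∫ ω̄_k • E⟩`. Bessel's inequality in `L²(𝕋; H)`, with Parseval's
identity in `H` summing out `j`, gives `∑_k ‖∫ ω̄_k • E‖² ≤ ‖E‖₂²`.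
-/

open MeasureTheory
open scoped Real ComplexConjugate InnerProductSpace

theorem HilbertBasis.tsum_norm_inner_sq {ι 𝕜 E : Type*} [RCLike 𝕜] [NormedAddCommGroup E]
    [InnerProductSpace 𝕜 E] (b : HilbertBasis ι 𝕜 E) (x : E) :
    ∑' i, ‖⟪b i, x⟫_𝕜‖ ^ 2 = ‖x‖ ^ 2 := by
  have hterm : ∀ i, ⟪x, b i⟫_𝕜 * ⟪b i, x⟫_𝕜 = ((‖⟪b i, x⟫_𝕜‖ ^ 2 : ℝ) : 𝕜) := fun i => by
    rw [← inner_conj_symm x, RCLike.conj_mul, RCLike.ofReal_pow]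
  have h := b.hasSum_inner_mul_inner x x
  simp only [hterm, inner_self_eq_norm_sq_to_K, ← RCLike.ofReal_pow, RCLike.hasSum_ofReal] at h
  exact h.tsum_eq

theorem HilbertBasis.separableSpace {ι 𝕜 E : Type*} [Countable ι] [RCLike 𝕜] [NormedAddCommGroup E]
    [InnerProductSpace 𝕜 E] (b : HilbertBasis ι 𝕜 E) : TopologicalSpace.SeparableSpace E := by
  have h := ((Set.countable_range b).isSeparable.span (R := 𝕜)).closure
  rw [← Submodule.topologicalClosure_coe, b.dense_span, Submodule.top_coe] at h
  exact TopologicalSpace.isSeparable_univ_iff.1 h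

namespace MeasureTheory

variable {α : Type*} [MeasurableSpace α] {ν : Measure α}
  {H : Type*} [NormedAddCommGroup H] [InnerProductSpace ℂ H]

theorem MemLp.smul_const {p : ENNReal} {f : α → ℂ} (hf : MemLp f p ν) (u : H) :
    MemLp (fun x => f x • u) p ν :=
  (ContinuousLinearMap.toSpanSingleton ℂ u).comp_memLp' hf

namespace L2

theorem inner_toLp_toLp {f g : α → H} (hf : MemLp f 2 ν) (hg : MemLp g 2 ν) :
    ⟪hf.toLp f, hg.toLp g⟫_ℂ = ∫ x, ⟪f x, g x⟫_ℂ ∂ν := by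
  rw [L2.inner_def]
  refine integral_congr_ae ?_
  filter_upwards [hf.coeFn_toLp, hg.coeFn_toLp] with x hfx hgx
  rw [hfx, hgx]

theorem norm_toLp_sq {f : α → H} (hf : MemLp f 2 ν) :
    ‖hf.toLp f‖ ^ 2 = ∫ x, ‖f x‖ ^ 2 ∂ν := by
  have hpt : ∀ y : H, ⟪y, y⟫_ℂ = ((‖y‖ ^ 2 : ℝ) : ℂ) := fun y => by
    push_cast; exact inner_self_eq_norm_sq_to_K y
  rw [norm_sq_eq_re_inner (𝕜 := ℂ), inner_toLp_toLp]
  simp_rw [hpt]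
  rw [integral_complex_ofReal]
  exact Complex.ofReal_re _

theorem inner_toLp_smul_const_toLp_smul_const {f g : α → ℂ} (hf : MemLp f 2 ν) (hg : MemLp g 2 ν)
    (u w : H) :
    ⟪(hf.smul_const u).toLp _, (hg.smul_const w).toLp _⟫_ℂ = ⟪hf.toLp f, hg.toLp g⟫_ℂ * ⟪u, w⟫_ℂ := by
  simp_rw [inner_toLp_toLp, inner_smul_left, inner_smul_right, ← integral_mul_const]
  congr 1 with x
  simp only [RCLike.inner_apply]
  ring

theorem inner_toLp_smul_const_toLp [CompleteSpace H] {f : α → ℂ} {F : α → H}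
    (hf : MemLp f 2 ν) (hF : MemLp F 2 ν) (u : H) :
    ⟪(hf.smul_const u).toLp _, hF.toLp F⟫_ℂ = ⟪u, ∫ x, conj (f x) • F x ∂ν⟫_ℂ := by
  have hint : Integrable (fun x => conj (f x) • F x) ν :=
    memLp_one_iff_integrable.1 (hF.smul hf.star)
  rw [inner_toLp_toLp, ← integral_inner hint]
  simp_rw [inner_smul_left, inner_smul_right]

theorem orthonormal_toLp_smul_const {κ ι : Type*} {a : κ → α → ℂ} (ha : ∀ k, MemLp (a k) 2 ν)
    (hA : Orthonormal ℂ fun k => (ha k).toLp (a k)) {v : ι → H} (hv : Orthonormal ℂ v) :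
    Orthonormal ℂ fun p : κ × ι => ((ha p.1).smul_const (v p.2)).toLp _ := by
  classical
  rw [orthonormal_iff_ite] at hA hv ⊢
  rintro ⟨k, i⟩ ⟨l, j⟩
  rw [L2.inner_toLp_smul_const_toLp_smul_const (ha k) (ha l), hA, hv, ite_zero_mul_ite_zero,
    one_mul]
  simp only [Prod.mk.injEq]

end L2

variable [CompleteSpace H]

theorem tsum_norm_integral_conj_smul_sq_le {κ : Type*} {a : κ → α → ℂ}
    (ha : ∀ k, MemLp (a k) 2 ν) (hA : Orthonormal ℂ fun k => (ha k).toLp (a k))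
    {F : α → H} (hF : MemLp F 2 ν) :
    ∑' k, ‖∫ x, conj (a k x) • F x ∂ν‖ ^ 2 ≤ ∫ x, ‖F x‖ ^ 2 ∂ν := by
  obtain ⟨w, b, -⟩ := exists_hilbertBasis ℂ H
  have hG := L2.orthonormal_toLp_smul_const ha hA b.orthonormal
  have hcoef : ∀ p : κ × w, ⟪((ha p.1).smul_const (b p.2)).toLp _, hF.toLp F⟫_ℂ
      = ⟪b p.2, ∫ x, conj (a p.1 x) • F x ∂ν⟫_ℂ := fun p =>
    L2.inner_toLp_smul_const_toLp (ha p.1) hF (b p.2)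
  have hsum := hG.inner_products_summable (hF.toLp F)
  simp only [hcoef] at hsum
  calc ∑' k, ‖∫ x, conj (a k x) • F x ∂ν‖ ^ 2
      = ∑' k, ∑' j, ‖⟪b j, ∫ x, conj (a k x) • F x ∂ν⟫_ℂ‖ ^ 2 := by
        simp only [b.tsum_norm_inner_sq]
    _ = ∑' p : κ × w, ‖⟪((ha p.1).smul_const (b p.2)).toLp _, hF.toLp F⟫_ℂ‖ ^ 2 := by
        simp only [hcoef]
        exact (hsum.tsum_prod' fun k => hsum.prod_factor k).symm
    _ ≤ ‖hF.toLp F‖ ^ 2 := hG.tsum_inner_products_le _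
    _ = ∫ x, ‖F x‖ ^ 2 ∂ν := L2.norm_toLp_sq hF

theorem tsum_inv_mul_norm_integral_conj_smul_sq_le {κ : Type*} {g : κ → α → ℂ}
    (hg : ∀ k, MemLp (g k) 2 ν) (horth : Pairwise fun k l => ∫ x, conj (g k x) * g l x ∂ν = 0)
    {s : κ → ℝ} (hs : ∀ k, 0 < s k) (hnorm : ∀ k, ∫ x, ‖g k x‖ ^ 2 ∂ν = s k)
    {F : α → H} (hF : MemLp F 2 ν) :
    ∑' k, (s k)⁻¹ * ‖∫ x, conj (g k x) • F x ∂ν‖ ^ 2 ≤ ∫ x, ‖F x‖ ^ 2 ∂ν := by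
  set c : κ → ℝ := fun k => (√(s k))⁻¹
  have hc : ∀ k, c k ^ 2 = (s k)⁻¹ := fun k => by
    rw [inv_pow, Real.sq_sqrt (hs k).le]
  have ha : ∀ k, MemLp (fun x => (c k : ℂ) * g k x) 2 ν := fun k => (hg k).const_mul (c k : ℂ)
  have hA : Orthonormal ℂ fun k => (ha k).toLp _ := by
    classical
    rw [orthonormal_iff_ite]
    intro k l
    rw [L2.inner_toLp_toLp]
    have hpull : ∫ x, ⟪(c k : ℂ) * g k x, (c l : ℂ) * g l x⟫_ℂ ∂ν
        = (c k * c l : ℝ) * ∫ x, conj (g k x) * g l x ∂ν := by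
      rw [← integral_const_mul]
      congr 1 with x
      simp only [RCLike.inner_apply, map_mul, Complex.conj_ofReal, Complex.ofReal_mul]
      ring
    rw [hpull]
    split_ifs with hkl
    · subst hkl
      simp_rw [Complex.conj_mul', ← Complex.ofReal_pow]
      rw [integral_complex_ofReal, hnorm, ← Complex.ofReal_mul, ← sq, hc,
        inv_mul_cancel₀ (hs k).ne', Complex.ofReal_one]
    · rw [horth hkl, mul_zero]
  convert tsum_norm_integral_conj_smul_sq_le ha hA hF using 1
  congr 1 with k
  simp only [map_mul, Complex.conj_ofReal, mul_smul, Complex.coe_smul]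
  rw [integral_smul, norm_smul, mul_pow, Real.norm_eq_abs, sq_abs, hc]

end MeasureTheory

/-- The normalized Lebesgue measure `μ` on `𝕋`, pulled back along `θ ↦ exp (θ i)` to `(0, 2π]`. -/
noncomputable def angleMeasure : Measure ℝ :=
  ENNReal.ofReal (2 * π)⁻¹ • volume.restrict (Set.Ioc 0 (2 * π))

instance : IsFiniteMeasure angleMeasure := by
  constructor
  rw [angleMeasure, Measure.smul_apply, Measure.restrict_apply MeasurableSet.univ, Set.univ_inter,
    Real.volume_Ioc, smul_eq_mul]
  exact ENNReal.mul_lt_top ENNReal.ofReal_lt_top ENNReal.ofReal_lt_top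

theorem integral_angleMeasure {V : Type*} [NormedAddCommGroup V] [NormedSpace ℝ V] (g : ℝ → V) :
    ∫ θ, g θ ∂angleMeasure = (2 * π)⁻¹ • ∫ θ in (0 : ℝ)..(2 * π), g θ := by
  rw [angleMeasure, integral_smul_measure, ENNReal.toReal_ofReal (by positivity),
    intervalIntegral.integral_of_le Real.two_pi_pos.le]

theorem stmt6_general {H : Type*} [NormedAddCommGroup H] [InnerProductSpace ℂ H] [CompleteSpace H]
    (e : HilbertBasis ℕ ℂ H) (E : ℂ → H) (σ : ℕ → ℝ)
    [MeasurableSpace H] [BorelSpace H]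
    (hmeas : Measurable fun θ : ℝ => E (Complex.exp (θ * Complex.I)))
    (hbdd : ∃ B : ℝ, ∀ z : ℂ, ‖z‖ = 1 → ‖E z‖ ≤ B)
    (hσ : ∀ k, 0 < σ k)
    (horth : ∀ k l : ℕ, k ≠ l →
      (((2 * π : ℝ)) : ℂ)⁻¹ * ∫ θ in (0 : ℝ)..(2 * π),
          (inner ℂ (e k) (E (Complex.exp (θ * Complex.I))) : ℂ)
            * (starRingEnd ℂ) (inner ℂ (e l) (E (Complex.exp (θ * Complex.I))) : ℂ) = 0)
    (hnorm : ∀ k : ℕ,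
      (2 * π)⁻¹ * ∫ θ in (0 : ℝ)..(2 * π),
          (‖inner ℂ (e k) (E (Complex.exp (θ * Complex.I)))‖ : ℂ) ^ 2
        = 2 * σ k ^ 2)
    (n : ℕ) :
    ∑' k : ℕ, (1 / (2 * σ k ^ 2)) * ‖(2 * π)⁻¹ • ∫ θ in (0 : ℝ)..(2 * π),
        ((Complex.exp (θ * Complex.I)) ^ n
            * (starRingEnd ℂ) (inner ℂ (e k) (E (Complex.exp (θ * Complex.I))) : ℂ))
          • E (Complex.exp (θ * Complex.I))‖ ^ 2
      ≤ (2 * π)⁻¹ * ∫ θ in (0 : ℝ)..(2 * π), ‖E (Complex.exp (θ * Complex.I))‖ ^ 2 := by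
  obtain ⟨B, hB⟩ := hbdd
  have : TopologicalSpace.SeparableSpace H := e.separableSpace
  set Λ : ℝ → ℂ := fun θ => Complex.exp (θ * Complex.I)
  set F : ℝ → H := fun θ => E (Λ θ)
  have hΛ : ∀ θ, ‖Λ θ‖ = 1 := fun θ => Complex.norm_exp_ofReal_mul_I θ
  have hunit : ∀ θ, conj (Λ θ ^ n) * Λ θ ^ n = 1 := fun θ => by
    rw [Complex.conj_mul', norm_pow, hΛ, one_pow, Complex.ofReal_one, one_pow]
  have hF : MemLp F 2 angleMeasure :=
    MemLp.of_bound hmeas.aestronglyMeasurable B (.of_forall fun θ => hB _ (hΛ θ))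
  set g : ℕ → ℝ → ℂ := fun k θ => conj (Λ θ ^ n) * ⟪e k, F θ⟫_ℂ
  have hg_norm : ∀ k θ, ‖g k θ‖ = ‖⟪e k, F θ⟫_ℂ‖ := fun k θ => by
    simp only [g, norm_mul, RCLike.norm_conj, norm_pow, hΛ, one_pow, one_mul]
  have hg : ∀ k, MemLp (g k) 2 angleMeasure := fun k =>
    ((innerSL ℂ (e k)).comp_memLp' hF).of_le (by fun_prop) (.of_forall fun θ => (hg_norm k θ).le)
  have hg_orth : Pairwise fun k l => ∫ θ, conj (g k θ) * g l θ ∂angleMeasure = 0 := by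
    intro k l hkl
    have hpt : ∀ θ, conj (g k θ) * g l θ = ⟪e l, F θ⟫_ℂ * conj ⟪e k, F θ⟫_ℂ := fun θ => by
      simp only [g, map_mul, Complex.conj_conj]
      linear_combination (conj ⟪e k, F θ⟫_ℂ * ⟪e l, F θ⟫_ℂ) * hunit θ
    simp_rw [hpt, integral_angleMeasure, Complex.real_smul, Complex.ofReal_inv]
    exact horth l k hkl.symm
  have hg_sq : ∀ k, ∫ θ, ‖g k θ‖ ^ 2 ∂angleMeasure = 2 * σ k ^ 2 := fun k => by
    simp_rw [hg_norm, integral_angleMeasure, smul_eq_mul]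
    apply Complex.ofReal_injective
    push_cast
    rw [← intervalIntegral.integral_ofReal]
    simpa using hnorm k
  have key := tsum_inv_mul_norm_integral_conj_smul_sq_le hg hg_orth
    (fun k => by have := hσ k; positivity) hg_sq hF
  have hconj : ∀ k θ, conj (g k θ) = Λ θ ^ n * conj ⟪e k, F θ⟫_ℂ := fun k θ => by
    simp only [g, map_mul, Complex.conj_conj]
  simpa only [hconj, integral_angleMeasure, smul_eq_mul, one_div] using key

/-- Lemma 5.4: if the scalar functions `λ ↦ ⟨e_k, E(λ)⟩` are pairwise orthogonal in `L²(𝕋,μ)`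
with `∫_𝕋 |⟨e_k,E(λ)⟩|² dμ = 2σ_k²`, then for every `n ≥ 1`,
`Σ_k (1/(2σ_k²)) ‖∫_𝕋 λⁿ conj⟨e_k,E(λ)⟩ E(λ) dμ(λ)‖² ≤ ‖E‖₂²`
(that is, `Σ_k σ_k² ‖Tⁿ e_k‖² ≤ ‖E‖₂²/2`). -/
theorem stmt6 {H : Type*} [NormedAddCommGroup H] [InnerProductSpace ℂ H] [CompleteSpace H]
    (e : HilbertBasis ℕ ℂ H) (E : ℂ → H) (σ : ℕ → ℝ)
    [MeasurableSpace H] [BorelSpace H]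
    (hmeas : Measurable fun θ : ℝ => E (Complex.exp (θ * Complex.I)))
    (hbdd : ∃ B : ℝ, ∀ z : ℂ, ‖z‖ = 1 → ‖E z‖ ≤ B)
    (hσ : ∀ k, 0 < σ k)
    (horth : ∀ k l : ℕ, k ≠ l →
      (((2 * π : ℝ)) : ℂ)⁻¹ * ∫ θ in (0 : ℝ)..(2 * π),
          (inner ℂ (e k) (E (Complex.exp (θ * Complex.I))) : ℂ)
            * (starRingEnd ℂ) (inner ℂ (e l) (E (Complex.exp (θ * Complex.I))) : ℂ) = 0)
    (hnorm : ∀ k : ℕ,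
      (2 * π)⁻¹ * ∫ θ in (0 : ℝ)..(2 * π),
          (‖inner ℂ (e k) (E (Complex.exp (θ * Complex.I)))‖ : ℂ) ^ 2
        = 2 * σ k ^ 2)
    (n : ℕ) (hn : 1 ≤ n) :
    ∑' k : ℕ, (1 / (2 * σ k ^ 2)) * ‖(2 * π)⁻¹ • ∫ θ in (0 : ℝ)..(2 * π),
        ((Complex.exp (θ * Complex.I)) ^ n
            * (starRingEnd ℂ) (inner ℂ (e k) (E (Complex.exp (θ * Complex.I))) : ℂ))
          • E (Complex.exp (θ * Complex.I))‖ ^ 2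
      ≤ (2 * π)⁻¹ * ∫ θ in (0 : ℝ)..(2 * π), ‖E (Complex.exp (θ * Complex.I))‖ ^ 2 :=
  stmt6_general e E σ hmeas hbdd hσ horth hnorm n
end

section
/- Let (Ω, 𝓕, P) be a probability space and let (Y_j)_{j≥1} be an independent sequence of nonnegative random variables such that for every j and every positive integer i, Y_j^i is integrable and E[Y_j^i] = i!·(E[Y_j])^i. Assume S := Σ_{j=1}^∞ E[Y_j] < ∞. Then for every positive integer k, E[(Σ_{j=1}^∞ Y_j)^k] ≤ k!·S^k. -/
/-!
Expanding `(∑ j ∈ s, Y j) ^ k` by the multinomial theorem and using independence, each term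
`multinomial ℓ · ∏ E[Y_j ^ ℓ_j]` equals `multinomial ℓ · ∏ ℓ_j! · ∏ E[Y_j] ^ ℓ_j`, that is
`k! · ∏ E[Y_j] ^ ℓ_j`, which is at most `k!` times the corresponding term of
`(∑ j ∈ s, E[Y_j]) ^ k`. Working with
`ℝ≥0∞`-valued variables, monotone convergence passes from finite sums to the whole series, and
the finiteness of the bound brings the estimate back to Bochner integrals.
-/

open MeasureTheory ProbabilityTheory Finset
open scoped ENNReal Nat

theorem sum_piAntidiag_multinomial_mul_prod_factorial_mul_pow_le {ι R : Type*} [DecidableEq ι]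
    [CommSemiring R] [PartialOrder R] [CanonicallyOrderedAdd R] [IsOrderedRing R]
    (s : Finset ι) (m : ι → R) (k : ℕ) :
    ∑ ℓ ∈ s.piAntidiag k, (Nat.multinomial s ℓ : R) * ∏ j ∈ s, ((ℓ j)! * m j ^ ℓ j)
      ≤ k ! * (∑ j ∈ s, m j) ^ k := by
  rw [sum_pow_eq_sum_piAntidiag, mul_sum]
  refine sum_le_sum fun ℓ hℓ => ?_
  have hfact : (∏ j ∈ s, ((ℓ j)! : R)) * Nat.multinomial s ℓ = k ! := by
    rw [← (mem_piAntidiag.1 hℓ).1, ← Nat.multinomial_spec]; push_cast; rfl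
  calc (Nat.multinomial s ℓ : R) * ∏ j ∈ s, ((ℓ j)! * m j ^ ℓ j)
      = k ! * ∏ j ∈ s, m j ^ ℓ j := by rw [prod_mul_distrib, ← hfact]; ring
    _ ≤ k ! * (Nat.multinomial s ℓ * ∏ j ∈ s, m j ^ ℓ j) := by
      gcongr
      exact le_mul_of_one_le_left zero_le
        (by simpa using Nat.mono_cast (α := R) (Nat.multinomial_pos s ℓ))

section Moments

variable {Ω : Type*} [MeasurableSpace Ω] {P : Measure Ω}

theorem lintegral_finsetSum_pow_le_of_iIndepFun {ι : Type*} [DecidableEq ι]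
    {X : ι → Ω → ℝ≥0∞} {m : ι → ℝ≥0∞}
    (hmeas : ∀ j, Measurable (X j)) (hindep : iIndepFun X P)
    (hmom : ∀ j i, ∫⁻ ω, X j ω ^ i ∂P ≤ i ! * m j ^ i) (s : Finset ι) (k : ℕ) :
    ∫⁻ ω, (∑ j ∈ s, X j ω) ^ k ∂P ≤ k ! * (∑ j ∈ s, m j) ^ k := by
  have hprod_meas (ℓ : ι → ℕ) : Measurable fun ω => ∏ j ∈ s, X j ω ^ ℓ j :=
    measurable_prod s fun j _ => (hmeas j).pow_const (ℓ j)
  calc ∫⁻ ω, (∑ j ∈ s, X j ω) ^ k ∂P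
      = ∑ ℓ ∈ s.piAntidiag k,
          (Nat.multinomial s ℓ : ℝ≥0∞) * ∏ j ∈ s, ∫⁻ ω, X j ω ^ ℓ j ∂P := by
        simp_rw [sum_pow_eq_sum_piAntidiag]
        rw [lintegral_finsetSum _ fun ℓ _ => (hprod_meas ℓ).const_mul _]
        refine sum_congr rfl fun ℓ _ => ?_
        rw [lintegral_const_mul _ (hprod_meas ℓ), lintegral_prod_eq_prod_lintegral_of_indepFun s
          (fun j ω => X j ω ^ ℓ j) (hindep.comp _ fun j => measurable_id.pow_const (ℓ j))
          fun j => (hmeas j).pow_const (ℓ j)]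
    _ ≤ ∑ ℓ ∈ s.piAntidiag k, (Nat.multinomial s ℓ : ℝ≥0∞) * ∏ j ∈ s, ((ℓ j)! * m j ^ ℓ j) := by
        gcongr with ℓ _ j; exact hmom j (ℓ j)
    _ ≤ k ! * (∑ j ∈ s, m j) ^ k := sum_piAntidiag_multinomial_mul_prod_factorial_mul_pow_le s m k

theorem lintegral_tsum_pow_le_of_iIndepFun {X : ℕ → Ω → ℝ≥0∞} {m : ℕ → ℝ≥0∞}
    (hmeas : ∀ j, Measurable (X j)) (hindep : iIndepFun X P)
    (hmom : ∀ j i, ∫⁻ ω, X j ω ^ i ∂P ≤ i ! * m j ^ i) (k : ℕ) :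
    ∫⁻ ω, (∑' j, X j ω) ^ k ∂P ≤ k ! * (∑' j, m j) ^ k := by
  simp_rw [ENNReal.tsum_eq_iSup_nat, ENNReal.iSup_pow]
  rw [lintegral_iSup (fun n => (measurable_sum _ fun j _ => hmeas j).pow_const k)
    fun n₁ n₂ h ω => pow_le_pow_left' (sum_le_sum_of_subset (range_subset_range.2 h)) k]
  refine iSup_le fun n =>
    (lintegral_finsetSum_pow_le_of_iIndepFun hmeas hindep hmom _ k).trans ?_
  gcongr
  exact le_iSup (fun i => (∑ j ∈ range i, m j) ^ k) n

theorem lintegral_ofReal_pow_le_factorial_mul [IsZeroOrProbabilityMeasure P] {f : Ω → ℝ}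
    (hf : ∀ ω, 0 ≤ f ω)
    (hint : ∀ i, 1 ≤ i → Integrable (fun ω => f ω ^ i) P)
    (hmom : ∀ i, 1 ≤ i → ∫ ω, f ω ^ i ∂P = i ! * (∫ ω, f ω ∂P) ^ i) (i : ℕ) :
    ∫⁻ ω, ENNReal.ofReal (f ω) ^ i ∂P ≤ i ! * ENNReal.ofReal (∫ ω, f ω ∂P) ^ i := by
  rcases Nat.eq_zero_or_pos i with rfl | hi
  · simpa using prob_le_one
  simp_rw [← ENNReal.ofReal_pow (hf _)]
  rw [← ofReal_integral_eq_lintegral_ofReal (hint i hi)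
      (ae_of_all _ fun ω => pow_nonneg (hf ω) i), hmom i hi,
    ENNReal.ofReal_mul (by positivity), ENNReal.ofReal_natCast,
    ENNReal.ofReal_pow (integral_nonneg hf)]

end Moments

theorem stmt7_general {Ω : Type*} [MeasurableSpace Ω] (P : Measure Ω) [IsProbabilityMeasure P]
    (Y : ℕ → Ω → ℝ) (hmeas : ∀ j, Measurable (Y j))
    (hindep : ProbabilityTheory.iIndepFun Y P)
    (hpos : ∀ j ω, 0 ≤ Y j ω)
    (hint : ∀ j (i : ℕ), 1 ≤ i → Integrable (fun ω => (Y j ω) ^ i) P)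
    (hmom : ∀ j (i : ℕ), 1 ≤ i →
      ∫ ω, (Y j ω) ^ i ∂P = (i.factorial : ℝ) * (∫ ω, Y j ω ∂P) ^ i)
    (hsum : Summable fun j => ∫ ω, Y j ω ∂P)
    (k : ℕ) :
    ∫ ω, (∑' j, Y j ω) ^ k ∂P ≤ (k.factorial : ℝ) * (∑' j, ∫ ω, Y j ω ∂P) ^ k := by
  set X : ℕ → Ω → ℝ≥0∞ := fun j ω => ENNReal.ofReal (Y j ω)
  have hX_meas (j : ℕ) : Measurable (X j) := (hmeas j).ennreal_ofReal
  have hbound := lintegral_tsum_pow_le_of_iIndepFun hX_meas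
    (hindep.comp _ fun _ => ENNReal.measurable_ofReal)
    (fun j => lintegral_ofReal_pow_le_factorial_mul (hpos j) (hint j) (hmom j)) k
  rw [← ENNReal.ofReal_tsum_of_nonneg (fun j => integral_nonneg (hpos j)) hsum] at hbound
  have hsum_meas : Measurable fun ω => (∑' j, X j ω) ^ k :=
    (Measurable.tsum hX_meas).pow_const k
  have hsum_toReal (ω : Ω) : ∑' j, Y j ω = (∑' j, X j ω).toReal := by
    rw [ENNReal.tsum_toReal_eq fun j => ENNReal.ofReal_ne_top]
    exact tsum_congr fun j => (ENNReal.toReal_ofReal (hpos j ω)).symm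
  calc ∫ ω, (∑' j, Y j ω) ^ k ∂P = ∫ ω, ((∑' j, X j ω) ^ k).toReal ∂P := by
        simp_rw [hsum_toReal, ENNReal.toReal_pow]
    _ = (∫⁻ ω, (∑' j, X j ω) ^ k ∂P).toReal :=
        integral_toReal hsum_meas.aemeasurable
          (ae_lt_top hsum_meas (ne_top_of_le_ne_top (by finiteness) hbound))
    _ ≤ (k ! * ENNReal.ofReal (∑' j, ∫ ω, Y j ω ∂P) ^ k).toReal :=
        ENNReal.toReal_mono (by finiteness) hbound
    _ = k ! * (∑' j, ∫ ω, Y j ω ∂P) ^ k := by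
        simp [ENNReal.toReal_ofReal (tsum_nonneg fun j => integral_nonneg (hpos j))]

/-- Abstract form of Proposition 5.5 (moments of the Gaussian measure): if `(Y_j)` is an
independent sequence of nonnegative random variables with `E[Y_j^i] = i!·(E[Y_j])^i` and
`S = Σ_j E[Y_j] < ∞`, then `E[(Σ_j Y_j)^k] ≤ k!·S^k` for every `k ≥ 1`. -/
theorem stmt7 {Ω : Type*} [MeasurableSpace Ω] (P : Measure Ω) [IsProbabilityMeasure P]
    (Y : ℕ → Ω → ℝ) (hmeas : ∀ j, Measurable (Y j))
    (hindep : ProbabilityTheory.iIndepFun Y P)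
    (hpos : ∀ j ω, 0 ≤ Y j ω)
    (hint : ∀ j (i : ℕ), 1 ≤ i → Integrable (fun ω => (Y j ω) ^ i) P)
    (hmom : ∀ j (i : ℕ), 1 ≤ i →
      ∫ ω, (Y j ω) ^ i ∂P = (i.factorial : ℝ) * (∫ ω, Y j ω ∂P) ^ i)
    (hsum : Summable fun j => ∫ ω, Y j ω ∂P)
    (k : ℕ) (hk : 1 ≤ k) :
    ∫ ω, (∑' j, Y j ω) ^ k ∂P ≤ (k.factorial : ℝ) * (∑' j, ∫ ω, Y j ω ∂P) ^ k :=
  stmt7_general P Y hmeas hindep hpos hint hmom hsum k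
end

section
/- Let T be the Kalisch-type operator on L²([0,2π]) (with Lebesgue measure) defined by (Tf)(θ) = e^{iθ}·f(θ) − ∫_0^θ i·e^{it}·f(t) dt. For α ∈ [0,2π), let E(e^{iα}) := 1_{(α,2π)}, the indicator function of the interval (α, 2π). Then T(E(e^{iα})) = e^{iα}·E(e^{iα}) in L²([0,2π]); that is, for almost every θ ∈ [0,2π], e^{iθ}·1_{(α,2π)}(θ) − ∫_0^θ i·e^{it}·1_{(α,2π)}(t) dt = e^{iα}·1_{(α,2π)}(θ). -/
open MeasureTheory
open scoped Real
open Set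

/-! For `θ > α` the integral runs over `(α, θ]`, where `i e^{it}` is the derivative of `e^{it}`,
so it equals `e^{iθ} - e^{iα}`; for `θ ≤ α` both sides vanish. Only the null set `{2π}`, where
the indicator drops to `0`, has to be discarded. -/

theorem intervalIntegral_indicator_Ioo {E : Type*} [NormedAddCommGroup E] [NormedSpace ℝ E]
    {f : ℝ → E} {a b c θ : ℝ} (hca : c ≤ a) (hcθ : c ≤ θ) (hθb : θ < b) :
    ∫ t in c..θ, (Ioo a b).indicator f t = ∫ t in Ioc a θ, f t := by
  rw [intervalIntegral.integral_of_le hcθ, integral_indicator measurableSet_Ioo,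
    Measure.restrict_restrict measurableSet_Ioo]
  congr 2
  ext t
  simp only [mem_inter_iff, mem_Ioo, mem_Ioc]
  constructor
  · rintro ⟨⟨hat, -⟩, -, htθ⟩
    exact ⟨hat, htθ⟩
  · rintro ⟨hat, htθ⟩
    exact ⟨⟨hat, htθ.trans_lt hθb⟩, hca.trans_lt hat, htθ⟩

theorem integral_mul_exp_ofReal_mul {c : ℂ} (hc : c ≠ 0) (a b : ℝ) :
    ∫ t in a..b, c * Complex.exp (t * c) = Complex.exp (b * c) - Complex.exp (a * c) := by
  simp_rw [mul_comm _ c]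
  rw [intervalIntegral.integral_const_mul, integral_exp_mul_complex hc, mul_div_cancel₀ _ hc]

theorem stmt11_general (α : ℝ) (hα0 : 0 ≤ α) :
    ∀ᵐ (θ : ℝ) ∂(volume.restrict (Set.Icc (0 : ℝ) (2 * π))),
      Complex.exp (θ * Complex.I) * Set.indicator (Set.Ioo α (2 * π)) (fun _ => (1 : ℂ)) θ
          - ∫ t in (0 : ℝ)..θ,
              Complex.I * Complex.exp (t * Complex.I)
                * Set.indicator (Set.Ioo α (2 * π)) (fun _ => (1 : ℂ)) t
        = Complex.exp (α * Complex.I)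
            * Set.indicator (Set.Ioo α (2 * π)) (fun _ => (1 : ℂ)) θ := by
  rw [Measure.restrict_congr_set Ico_ae_eq_Icc.symm]
  filter_upwards [ae_restrict_mem measurableSet_Ico] with θ ⟨hθ0, hθ2π⟩
  have hintegrand : (fun t : ℝ => Complex.I * Complex.exp (t * Complex.I)
      * (Ioo α (2 * π)).indicator (fun _ => (1 : ℂ)) t)
      = (Ioo α (2 * π)).indicator (fun t : ℝ => Complex.I * Complex.exp (t * Complex.I)) := by
    ext t
    simp [indicator_apply]
  rw [hintegrand, intervalIntegral_indicator_Ioo hα0 hθ0 hθ2π]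
  rcases le_or_gt θ α with hθα | hαθ
  · have hθS : θ ∉ Ioo α (2 * π) := fun h => (h.1.trans_le hθα).false
    simp [Ioc_eq_empty_of_le hθα, hθS]
  · have hθS : θ ∈ Ioo α (2 * π) := ⟨hαθ, hθ2π⟩
    rw [← intervalIntegral.integral_of_le hαθ.le, integral_mul_exp_ofReal_mul Complex.I_ne_zero,
      indicator_of_mem hθS]
    ring

/-- Example 2.12: for the Kalisch-type operator `(Tf)(θ) = e^{iθ}f(θ) − ∫_0^θ i e^{it} f(t) dt`
on `L²([0,2π])`, the indicator function `E(e^{iα}) = 1_{(α,2π)}` is an eigenvector associated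
with the unimodular eigenvalue `e^{iα}`: for a.e. `θ ∈ [0,2π]`,
`e^{iθ}·1_{(α,2π)}(θ) − ∫_0^θ i e^{it} 1_{(α,2π)}(t) dt = e^{iα}·1_{(α,2π)}(θ)`. -/
theorem stmt11 (α : ℝ) (hα0 : 0 ≤ α) (hα2 : α < 2 * π) :
    ∀ᵐ (θ : ℝ) ∂(volume.restrict (Set.Icc (0 : ℝ) (2 * π))),
      Complex.exp (θ * Complex.I) * Set.indicator (Set.Ioo α (2 * π)) (fun _ => (1 : ℂ)) θ
          - ∫ t in (0 : ℝ)..θ,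
              Complex.I * Complex.exp (t * Complex.I)
                * Set.indicator (Set.Ioo α (2 * π)) (fun _ => (1 : ℂ)) t
        = Complex.exp (α * Complex.I)
            * Set.indicator (Set.Ioo α (2 * π)) (fun _ => (1 : ℂ)) θ :=
  stmt11_general α hα0
end
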